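/- arXiv:math/0603087 — 4 statements merged into one kernel-verified Lean document; each statement's English description precedes it below -/
import Mathlib

section
/- Let z₁, …, z_d be distinct points in the unit disc and w₁, …, w_d positive real numbers. Suppose that for every partition of {1,…,d} into disjoint sets T and S there exists a positive harmonic function u on D with u(z_n) ≥ w_n for n ∈ T and u(z_n) ≤ w_n for n ∈ S. Then there exists a positive harmonic function u on D with u(z_n) = w_n for all n = 1, …, d. -/
/-- The open unit disc in the complex plane. -/
def unitDisc : Set ℂ := Metric.ball 0 1

/-- A real-valued function is harmonic on the unit disc iff it is the real part
of a holomorphic function there (the disc is simply connected). -/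
def HarmonicOnDisc (u : ℂ → ℝ) : Prop :=
  ∃ f : ℂ → ℂ, DifferentiableOn ℂ f unitDisc ∧ ∀ z ∈ unitDisc, u z = (f z).re

/-!
Let `v T = (u_T(z_n))_n` be the value vectors of the given one-sided functions `u_T`. If `w` were
not a convex combination of them, Hahn–Banach would give a functional `b` with `b(v T) < b(w)` for
every `T`; but for `T = {n | 0 < b_n}` the one-sided inequalities give `b(w) ≤ b(v T)`. The same
convex combination of the `u_T` is then a positive harmonic function interpolating `w`.
-/

open Set

theorem mem_convexHull_of_forall_exists_le {E : Type*} [AddCommGroup E] [Module ℝ E]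
    [TopologicalSpace E] [T2Space E] [IsTopologicalAddGroup E] [ContinuousSMul ℝ E]
    [LocallyConvexSpace ℝ E] {s : Set E} (hs : s.Finite) {x : E}
    (h : ∀ f : StrongDual ℝ E, ∃ y ∈ s, f x ≤ f y) : x ∈ convexHull ℝ s := by
  by_contra hx
  obtain ⟨f, u, hfs, hfx⟩ :=
    geometric_hahn_banach_closed_point (convex_convexHull ℝ s)
      (hs.isClosed_convexHull (𝕜 := ℝ)) hx
  obtain ⟨y, hy, hxy⟩ := h f
  linarith [hfs y (subset_convexHull ℝ s hy)]

theorem sum_mul_le_sum_mul_of_one_sided {α : Type*} [Fintype α] {b v w : α → ℝ}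
    (hpos : ∀ n, 0 < b n → w n ≤ v n) (hnpos : ∀ n, ¬0 < b n → v n ≤ w n) :
    ∑ n, w n * b n ≤ ∑ n, v n * b n := by
  refine Finset.sum_le_sum fun n _ => ?_
  by_cases hb : 0 < b n
  · exact mul_le_mul_of_nonneg_right (hpos n hb) hb.le
  · exact mul_le_mul_of_nonpos_right (hnpos n hb) (not_lt.1 hb)

theorem mem_convexHull_of_one_sided {α : Type*} [Fintype α]
    (v : Finset α → α → ℝ) (w : α → ℝ)
    (hge : ∀ T, ∀ n ∈ T, w n ≤ v T n) (hle : ∀ T, ∀ n ∉ T, v T n ≤ w n) :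
    w ∈ convexHull ℝ (range v) := by
  classical
  refine mem_convexHull_of_forall_exists_le (finite_range v) fun f => ?_
  set b : α → ℝ := fun n => f (Pi.single n 1)
  have hf (x : α → ℝ) : f x = ∑ n, x n * b n := by
    conv_lhs => rw [← Finset.univ_sum_single x, map_sum]
    refine Finset.sum_congr rfl fun n _ => ?_
    rw [← smul_eq_mul, ← map_smul, ← Pi.single_smul', smul_eq_mul, mul_one]
  refine ⟨_, mem_range_self (f := v) {n | 0 < b n}, ?_⟩
  rw [hf, hf]
  exact sum_mul_le_sum_mul_of_one_sided (fun n hn => hge _ n (by simpa using hn))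
    (fun n hn => hle _ n (by simpa using hn))

theorem HarmonicOnDisc.add {u v : ℂ → ℝ} (hu : HarmonicOnDisc u) (hv : HarmonicOnDisc v) :
    HarmonicOnDisc (u + v) := by
  obtain ⟨f, hf, hfu⟩ := hu
  obtain ⟨g, hg, hgv⟩ := hv
  exact ⟨f + g, hf.add hg, fun ζ hζ => by simp [hfu ζ hζ, hgv ζ hζ]⟩

theorem HarmonicOnDisc.const_smul {u : ℂ → ℝ} (c : ℝ) (hu : HarmonicOnDisc u) :
    HarmonicOnDisc (c • u) := by
  obtain ⟨f, hf, hfu⟩ := hu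
  exact ⟨(c : ℂ) • f, hf.const_smul (c : ℂ), fun ζ hζ => by simp [hfu ζ hζ]⟩

def posHarmonicOnDisc : Set (ℂ → ℝ) := {u | HarmonicOnDisc u ∧ ∀ ζ ∈ unitDisc, 0 < u ζ}

theorem convex_posHarmonicOnDisc : Convex ℝ posHarmonicOnDisc := by
  rintro u ⟨hu, hu_pos⟩ v ⟨hv, hv_pos⟩ a b ha hb hab
  exact ⟨(hu.const_smul a).add (hv.const_smul b),
    fun ζ hζ => convex_Ioi (0 : ℝ) (hu_pos ζ hζ) (hv_pos ζ hζ) ha hb hab⟩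

theorem interpolation_from_one_sided_general (d : ℕ) (z : Fin d → ℂ)
    (w : Fin d → ℝ)
    (H : ∀ T : Finset (Fin d), ∃ u : ℂ → ℝ, HarmonicOnDisc u ∧
      (∀ ζ ∈ unitDisc, 0 < u ζ) ∧
      (∀ n ∈ T, w n ≤ u (z n)) ∧ (∀ n, n ∉ T → u (z n) ≤ w n)) :
    ∃ u : ℂ → ℝ, HarmonicOnDisc u ∧ (∀ ζ ∈ unitDisc, 0 < u ζ) ∧
      ∀ n, u (z n) = w n := by
  choose U hU hpos hge hle using H
  let eval : (ℂ → ℝ) →ₗ[ℝ] Fin d → ℝ := LinearMap.pi fun n => LinearMap.proj (z n)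
  have hw : w ∈ eval '' convexHull ℝ (range U) := by
    rw [eval.image_convexHull, ← range_comp]
    exact mem_convexHull_of_one_sided _ w hge hle
  obtain ⟨u, hu, rfl⟩ := hw
  have hU_mem : range U ⊆ posHarmonicOnDisc := range_subset_iff.2 fun T => ⟨hU T, hpos T⟩
  obtain ⟨hu_harm, hu_pos⟩ := convexHull_min hU_mem convex_posHarmonicOnDisc hu
  exact ⟨u, hu_harm, hu_pos, fun n => rfl⟩

/-- If for every partition `{1,…,d} = T ∪ S` there is a positive harmonic
function `u` with `u(z_n) ≥ w_n` on `T` and `u(z_n) ≤ w_n` on `S`, then some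
positive harmonic function interpolates `w_n` at `z_n` for all `n`. -/
theorem interpolation_from_one_sided (d : ℕ) (z : Fin d → ℂ)
    (hz : ∀ n, z n ∈ unitDisc) (hinj : Function.Injective z)
    (w : Fin d → ℝ) (hw : ∀ n, 0 < w n)
    (H : ∀ T : Finset (Fin d), ∃ u : ℂ → ℝ, HarmonicOnDisc u ∧
      (∀ ζ ∈ unitDisc, 0 < u ζ) ∧
      (∀ n ∈ T, w n ≤ u (z n)) ∧ (∀ n, n ∉ T → u (z n) ≤ w n)) :
    ∃ u : ℂ → ℝ, HarmonicOnDisc u ∧ (∀ ζ ∈ unitDisc, 0 < u ζ) ∧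
      ∀ n, u (z n) = w n :=
  interpolation_from_one_sided_general d z w H
end

section
/- Let (z_n) be a separated sequence in the unit disc satisfying condition (1.3) with constants M > 0 and 0 < α < 1. Then (z_n) satisfies the Carleson condition: there exists C > 0 such that Σ_{z_n ∈ Q} (1−|z_n|) ≤ C·ℓ(Q) for every Carleson square Q = {re^{iθ} : 0 < 1−r < ℓ(Q), |θ−θ₀| < ℓ(Q)}. -/
open MeasureTheory

/-- The pseudohyperbolic distance ρ(z,w) = |(z-w)/(1 - conj w * z)|. -/
noncomputable def pseudoDist (z w : ℂ) : ℝ :=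
  ‖(z - w) / (1 - (starRingEnd ℂ) w * z)‖

/-- The base-2 hyperbolic distance β(z,w) = log₂((1+ρ)/(1-ρ)). -/
noncomputable def hypDist (z w : ℂ) : ℝ :=
  Real.logb 2 ((1 + pseudoDist z w) / (1 - pseudoDist z w))

lemma normSq_identity (w v : ℂ) :
    Complex.normSq (1 - (starRingEnd ℂ) v * w) - Complex.normSq (w - v)
      = (1 - Complex.normSq w) * (1 - Complex.normSq v) := by
  simp only [Complex.normSq_apply, Complex.sub_re, Complex.sub_im, Complex.mul_re,
    Complex.mul_im, Complex.conj_re, Complex.conj_im, Complex.one_re, Complex.one_im]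
  ring

lemma absD_pos (w v : ℂ) (hw : ‖w‖ < 1) (hv : ‖v‖ < 1) :
    1 - ‖v‖ * ‖w‖ ≤ ‖(1 - (starRingEnd ℂ) v * w)‖ ∧
    0 < ‖(1 - (starRingEnd ℂ) v * w)‖ := by
  have h1 : ‖((starRingEnd ℂ) v * w)‖ = ‖v‖ * ‖w‖ := by
    rw [norm_mul, Complex.norm_conj]
  have h2 : ‖(1:ℂ)‖ - ‖(starRingEnd ℂ) v * w‖ ≤ ‖1 - (starRingEnd ℂ) v * w‖ :=
    norm_sub_norm_le _ _
  simp only [h1, norm_one] at h2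
  have hva := norm_nonneg v
  have hwa := norm_nonneg w
  constructor
  · exact h2
  · nlinarith

lemma pseudoDist_lt_one (w v : ℂ) (hw : ‖w‖ < 1) (hv : ‖v‖ < 1) :
    pseudoDist w v < 1 := by
  obtain ⟨-, hD⟩ := absD_pos w v hw hv
  unfold pseudoDist
  rw [norm_div, div_lt_one hD]
  have h1 := normSq_identity w v
  have hw2 : Complex.normSq w < 1 := by
    rw [← Complex.sq_norm]; nlinarith [norm_nonneg w]
  have hv2 : Complex.normSq v < 1 := by
    rw [← Complex.sq_norm]; nlinarith [norm_nonneg v]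
  nlinarith [Complex.sq_norm (w - v), Complex.sq_norm (1 - (starRingEnd ℂ) v * w),
    norm_nonneg (w - v), hD]

lemma hypDist_nonneg (w v : ℂ) (hw : ‖w‖ < 1) (hv : ‖v‖ < 1) :
    0 ≤ hypDist w v := by
  have h1 := pseudoDist_lt_one w v hw hv
  have h0 : 0 ≤ pseudoDist w v := norm_nonneg _
  apply Real.logb_nonneg (by norm_num)
  rw [le_div_iff₀ (by linarith)]
  linarith

lemma two_rpow_neg_hypDist (w v : ℂ) (hw : ‖w‖ < 1) (hv : ‖v‖ < 1) :
    (2:ℝ) ^ (-(hypDist w v)) = (1 - pseudoDist w v) / (1 + pseudoDist w v) := by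
  have h1 := pseudoDist_lt_one w v hw hv
  have h0 : 0 ≤ pseudoDist w v := norm_nonneg _
  have hX : 0 < (1 + pseudoDist w v) / (1 - pseudoDist w v) := div_pos (by linarith) (by linarith)
  rw [Real.rpow_neg (by norm_num), hypDist, Real.rpow_logb (by norm_num) (by norm_num) hX,
    inv_div]

open Complex in
lemma abs_sub_circle (w : ℂ) (hw : ‖w‖ ≤ 1) :
    ‖(w - Complex.exp (Complex.arg w * I))‖ = 1 - ‖w‖ := by
  have key : w - Complex.exp (Complex.arg w * I)
      = ((‖w‖ : ℂ) - 1) * Complex.exp (Complex.arg w * I) := by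
    rw [sub_mul, one_mul, Complex.norm_mul_exp_arg_mul_I]
  rw [key, norm_mul, Complex.norm_exp_ofReal_mul_I, mul_one, ← Complex.ofReal_one,
    ← Complex.ofReal_sub, Complex.norm_real, Real.norm_eq_abs, abs_of_nonpos (by linarith)]
  ring

open Complex in
lemma exp_diff_le (a b : ℝ) :
    ‖(Complex.exp (a * I) - Complex.exp (b * I))‖ ≤ |a - b| := by
  have h : Complex.normSq (Complex.exp (a * I) - Complex.exp (b * I))
      = 2 - 2 * Real.cos (a - b) := by
    simp only [Complex.exp_mul_I, Complex.normSq_apply, Complex.add_re, Complex.add_im,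
      Complex.sub_re, Complex.sub_im, Complex.mul_re, Complex.mul_im, Complex.I_re,
      Complex.I_im, Complex.cos_ofReal_re, Complex.cos_ofReal_im, Complex.sin_ofReal_re,
      Complex.sin_ofReal_im, Real.cos_sub]
    nlinarith [Real.sin_sq_add_cos_sq a, Real.sin_sq_add_cos_sq b]
  have h2 : 2 - 2 * Real.cos (a - b) ≤ (a - b) ^ 2 := by
    nlinarith [Real.one_sub_sq_div_two_le_cos (x := a - b)]
  have h3 : (‖(Complex.exp (a * I) - Complex.exp (b * I))‖) ^ 2 ≤ |a - b| ^ 2 := by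
    rw [Complex.sq_norm, h, _root_.sq_abs]; exact h2
  have := Real.sqrt_le_sqrt h3
  rwa [Real.sqrt_sq (norm_nonneg _), Real.sqrt_sq (abs_nonneg _)] at this

set_option maxHeartbeats 1000000 in
/-- Key pair estimate: if `w, v` lie in the disc, `w` is no higher than `v`,
and their arguments differ by at most `1 - |v|`, then
`1 - |w| ≤ 100 (1 - |v|) 2^(-β(w,v))`. -/
lemma pair_est (w v : ℂ) (hw : ‖w‖ < 1) (hv : ‖v‖ < 1)
    (hd : 1 - ‖w‖ ≤ 1 - ‖v‖)
    (hθ : |Complex.arg w - Complex.arg v| ≤ 1 - ‖v‖) :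
    1 - ‖w‖ ≤ 100 * (1 - ‖v‖) * (2:ℝ) ^ (-(hypDist w v)) := by
  set a := ‖w‖ with ha
  set b := ‖v‖ with hb
  have ha0 : 0 ≤ a := norm_nonneg w
  have hb0 : 0 ≤ b := norm_nonneg v
  set da := 1 - a with hda
  set db := 1 - b with hdb
  have hda0 : 0 < da := by simp [hda]; linarith
  have hdb0 : 0 < db := by simp [hdb]; linarith
  obtain ⟨-, hDpos⟩ := absD_pos w v hw hv
  set D := ‖(1 - (starRingEnd ℂ) v * w)‖ with hD
  -- |v - w| ≤ 3 db
  have hvw : ‖(v - w)‖ ≤ 3 * db := by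
    have e1 : v - w = (v - Complex.exp (Complex.arg v * Complex.I))
        + (Complex.exp (Complex.arg v * Complex.I) - Complex.exp (Complex.arg w * Complex.I))
        + (Complex.exp (Complex.arg w * Complex.I) - w) := by ring
    have t1 := abs_sub_circle v hv.le
    have t2 := exp_diff_le (Complex.arg v) (Complex.arg w)
    have t3 : ‖(Complex.exp (Complex.arg w * Complex.I) - w)‖ = da := by
      rw [← norm_neg, neg_sub]; exact abs_sub_circle w hw.le
    have habs : |Complex.arg v - Complex.arg w| ≤ db := by
      rw [abs_sub_comm]; exact hθ
    calc ‖(v - w)‖ ≤ _ + _ := by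
          rw [e1]; exact (norm_add_le _ _).trans (add_le_add_left (norm_add_le _ _) _)
      _ ≤ 3 * db := by rw [t1, t3]; linarith
  -- |D| ≤ 5 db
  have hDle : D ≤ 5 * db := by
    have e2 : (1:ℂ) - (starRingEnd ℂ) v * w
        = (1 - (starRingEnd ℂ) v * v) + (starRingEnd ℂ) v * (v - w) := by ring
    have t4 : (starRingEnd ℂ) v * v = (Complex.normSq v : ℂ) := by
      rw [mul_comm, Complex.mul_conj]
    have t5 : ‖(1 - (starRingEnd ℂ) v * v)‖ = 1 - b ^ 2 := by
      rw [t4, ← Complex.ofReal_one, ← Complex.ofReal_sub, Complex.norm_real, Real.norm_eq_abs,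
        ← Complex.sq_norm, ← hb, abs_of_nonneg (by nlinarith)]
    have t6 : ‖((starRingEnd ℂ) v * (v - w))‖ ≤ ‖(v - w)‖ := by
      rw [norm_mul, Complex.norm_conj, ← hb]
      nlinarith [norm_nonneg (v - w)]
    calc D = ‖_‖ := by rw [hD, e2]
      _ ≤ ‖(1 - (starRingEnd ℂ) v * v)‖
            + ‖((starRingEnd ℂ) v * (v - w))‖ := norm_add_le _ _
      _ ≤ (1 - b ^ 2) + 3 * db := by rw [t5]; linarith [t6.trans hvw]
      _ ≤ 5 * db := by nlinarith
  -- algebraic identity in multiplied form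
  set ρ := pseudoDist w v with hρ
  have hρ0 : 0 ≤ ρ := norm_nonneg _
  have hρ1 : ρ < 1 := pseudoDist_lt_one w v hw hv
  have hρeq : ρ = ‖(w - v)‖ / D := by rw [hρ, pseudoDist, norm_div]
  have hDne : D ≠ 0 := ne_of_gt hDpos
  have h1 := normSq_identity w v
  have e1 : Complex.normSq w = a ^ 2 := (Complex.sq_norm w).symm
  have e2 : Complex.normSq v = b ^ 2 := (Complex.sq_norm v).symm
  have e3 : Complex.normSq (w - v) = ‖(w - v)‖ ^ 2 := (Complex.sq_norm _).symm
  have e4 : Complex.normSq (1 - (starRingEnd ℂ) v * w) = D ^ 2 := (Complex.sq_norm _).symm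
  rw [e1, e2, e3, e4] at h1
  have hpow := two_rpow_neg_hypDist w v hw hv
  rw [← hρ] at hpow
  clear_value a b da db D ρ
  have hsq : (1 - ρ ^ 2) * D ^ 2 = (1 - a ^ 2) * (1 - b ^ 2) := by
    rw [hρeq]
    field_simp
    linarith [h1]
  have hρsq0 : (0:ℝ) ≤ 1 - ρ ^ 2 := by nlinarith
  have hD2 : D ^ 2 ≤ 25 * db ^ 2 := by nlinarith
  have hprod : da * db ≤ (1 - a ^ 2) * (1 - b ^ 2) := by
    have e : (1 - a ^ 2) * (1 - b ^ 2) = (da * db) * ((1 + a) * (1 + b)) := by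
      rw [hda, hdb]; ring
    rw [e]
    refine le_mul_of_one_le_right (le_of_lt (mul_pos hda0 hdb0)) ?_
    nlinarith
  have h5 : da ≤ (1 - ρ ^ 2) * (25 * db) := by
    have hmm : (1 - ρ ^ 2) * D ^ 2 ≤ (1 - ρ ^ 2) * (25 * db ^ 2) :=
      mul_le_mul_of_nonneg_left hD2 hρsq0
    rw [hsq] at hmm
    refine le_of_mul_le_mul_right ?_ hdb0
    calc da * db ≤ (1 - a ^ 2) * (1 - b ^ 2) := hprod
      _ ≤ (1 - ρ ^ 2) * (25 * db ^ 2) := hmm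
      _ = (1 - ρ ^ 2) * (25 * db) * db := by ring
  have h4 : 1 - ρ ^ 2 ≤ 4 * ((1 - ρ) / (1 + ρ)) := by
    rw [show (4:ℝ) * ((1 - ρ) / (1 + ρ)) = (4 * (1 - ρ)) / (1 + ρ) by ring,
      le_div_iff₀ (by linarith)]
    nlinarith
  rw [hpow]
  calc da ≤ (1 - ρ ^ 2) * (25 * db) := h5
    _ ≤ (4 * ((1 - ρ) / (1 + ρ))) * (25 * db) := by
        apply mul_le_mul_of_nonneg_right h4 (by linarith)
    _ = 100 * db * ((1 - ρ) / (1 + ρ)) := by ring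

lemma group_sum (z : ℕ → ℂ) (hz : ∀ n, ‖z n‖ < 1)
    (M α : ℝ) (hM : 0 < M) (hα : 0 < α) (hα1 : α < 1)
    (h13 : ∀ n : ℕ, ∀ l : ℕ, 1 ≤ l → ∀ F : Finset ℕ,
      (∀ j ∈ F, hypDist (z j) (z n) ≤ (l : ℝ)) →
      (F.card : ℝ) ≤ M * (2:ℝ) ^ (α * (l : ℝ)))
    (n : ℕ) (G : Finset ℕ)
    (hG : ∀ k ∈ G, 1 - ‖z k‖ ≤ 1 - ‖z n‖ ∧
      |Complex.arg (z k) - Complex.arg (z n)| ≤ 1 - ‖z n‖) :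
    ∑ k ∈ G, (1 - ‖z k‖)
      ≤ (200 * M / (1 - (2:ℝ) ^ (α - 1))) * (1 - ‖z n‖) := by
  set r := (2:ℝ) ^ (α - 1) with hr
  have hr0 : 0 < r := Real.rpow_pos_of_pos (by norm_num) _
  have hr1 : r < 1 := Real.rpow_lt_one_of_one_lt_of_neg (by norm_num) (by linarith)
  set dn := 1 - ‖z n‖ with hdn
  have hdn0 : 0 < dn := by
    have := hz n; simp only [hdn]; linarith
  set lvl : ℕ → ℕ := fun k => max 1 ⌈hypDist (z k) (z n)⌉₊ with hlvl
  have lvl_ge : ∀ k, hypDist (z k) (z n) ≤ (lvl k : ℝ) := by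
    intro k
    calc hypDist (z k) (z n) ≤ (⌈hypDist (z k) (z n)⌉₊ : ℝ) := Nat.le_ceil _
      _ ≤ (lvl k : ℝ) := by exact_mod_cast Nat.cast_le.mpr (le_max_right _ _)
  have lvl_lb : ∀ k, (lvl k : ℝ) - 1 ≤ max 0 (hypDist (z k) (z n)) := by
    intro k
    rcases Nat.eq_zero_or_pos ⌈hypDist (z k) (z n)⌉₊ with h0 | hpos
    · simp [hlvl, h0]
    · have : lvl k = ⌈hypDist (z k) (z n)⌉₊ := max_eq_right hpos
      rw [this]
      have hle : (⌈hypDist (z k) (z n)⌉₊:ℝ) ≤ ⌈max 0 (hypDist (z k) (z n))⌉₊ := by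
        have : ⌈hypDist (z k) (z n)⌉₊ ≤ ⌈max 0 (hypDist (z k) (z n))⌉₊ :=
          Nat.ceil_le_ceil (le_max_right 0 (hypDist (z k) (z n)))
        exact_mod_cast this
      linarith [Nat.ceil_lt_add_one (le_max_left 0 (hypDist (z k) (z n)))]
  have key : ∀ k ∈ G, 1 - ‖z k‖ ≤ 200 * dn * (2:ℝ) ^ (-((lvl k : ℕ) : ℝ)) := by
    intro k hk
    obtain ⟨hd, hθ⟩ := hG k hk
    have hβ0 : 0 ≤ hypDist (z k) (z n) := hypDist_nonneg _ _ (hz k) (hz n)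
    have hmax0 : max 0 (hypDist (z k) (z n)) = hypDist (z k) (z n) := max_eq_right hβ0
    have h1 : 1 - ‖z k‖ ≤ 100 * dn * (2:ℝ) ^ (-(hypDist (z k) (z n))) :=
      pair_est (z k) (z n) (hz k) (hz n) hd hθ
    have h2 : (2:ℝ) ^ (-(hypDist (z k) (z n))) ≤ (2:ℝ) ^ (1 - ((lvl k : ℕ) : ℝ)) := by
      apply Real.rpow_le_rpow_of_exponent_le (by norm_num)
      have := lvl_lb k; rw [hmax0] at this; linarith
    have h3 : (2:ℝ) ^ (1 - ((lvl k : ℕ) : ℝ)) = 2 * (2:ℝ) ^ (-((lvl k : ℕ) : ℝ)) := by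
      rw [show (1 : ℝ) - ((lvl k : ℕ) : ℝ) = 1 + (-((lvl k : ℕ) : ℝ)) by ring,
        Real.rpow_add (by norm_num), Real.rpow_one]
    calc 1 - ‖z k‖ ≤ 100 * dn * (2:ℝ) ^ (-(hypDist (z k) (z n))) := h1
      _ ≤ 100 * dn * (2 * (2:ℝ) ^ (-((lvl k : ℕ) : ℝ))) := by
          rw [← h3]; exact mul_le_mul_of_nonneg_left h2 (by positivity)
      _ = 200 * dn * (2:ℝ) ^ (-((lvl k : ℕ) : ℝ)) := by ring
  set N := G.sup lvl with hN
  have hmaps : ∀ k ∈ G, lvl k ∈ Finset.Icc 1 N :=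
    fun k hk => Finset.mem_Icc.mpr ⟨le_max_left _ _, Finset.le_sup hk⟩
  rw [← Finset.sum_fiberwise_of_maps_to hmaps (fun k => 1 - ‖z k‖)]
  have inner : ∀ l ∈ Finset.Icc 1 N,
      ∑ k ∈ G.filter (fun k => lvl k = l), (1 - ‖z k‖)
        ≤ 200 * M * dn * r ^ l := by
    intro l hl
    obtain ⟨hl1, -⟩ := Finset.mem_Icc.mp hl
    have hcard : ((G.filter (fun k => lvl k = l)).card : ℝ) ≤ M * (2:ℝ) ^ (α * (l:ℝ)) := by
      apply h13 n l hl1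
      intro j hj
      obtain ⟨hjG, hjl⟩ := Finset.mem_filter.mp hj
      calc hypDist (z j) (z n) ≤ (lvl j : ℝ) := lvl_ge j
        _ = (l : ℝ) := by rw [hjl]
    have hbd : ∀ k ∈ G.filter (fun k => lvl k = l),
        1 - ‖z k‖ ≤ 200 * dn * (2:ℝ) ^ (-(l:ℝ)) := by
      intro k hk
      obtain ⟨hkG, hkl⟩ := Finset.mem_filter.mp hk
      have := key k hkG
      rwa [hkl] at this
    calc ∑ k ∈ G.filter (fun k => lvl k = l), (1 - ‖z k‖)
        ≤ ((G.filter (fun k => lvl k = l)).card : ℝ) * (200 * dn * (2:ℝ) ^ (-(l:ℝ))) := by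
          have := Finset.sum_le_card_nsmul _ _ _ hbd
          rwa [nsmul_eq_mul] at this
      _ ≤ M * (2:ℝ) ^ (α * (l:ℝ)) * (200 * dn * (2:ℝ) ^ (-(l:ℝ))) := by
          apply mul_le_mul_of_nonneg_right hcard (by positivity)
      _ = 200 * M * dn * ((2:ℝ) ^ (α * (l:ℝ)) * (2:ℝ) ^ (-(l:ℝ))) := by ring
      _ = 200 * M * dn * r ^ l := by
          rw [← Real.rpow_add (by norm_num),
            show α * (l:ℝ) + -(l:ℝ) = (α - 1) * (l:ℝ) by ring, hr,
            Real.rpow_mul (by norm_num), Real.rpow_natCast]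
  calc ∑ l ∈ Finset.Icc 1 N, ∑ k ∈ G.filter (fun k => lvl k = l), (1 - ‖z k‖)
      ≤ ∑ l ∈ Finset.Icc 1 N, 200 * M * dn * r ^ l := Finset.sum_le_sum inner
    _ = 200 * M * dn * ∑ l ∈ Finset.Icc 1 N, r ^ l := by rw [Finset.mul_sum]
    _ ≤ 200 * M * dn * ∑ l ∈ Finset.range (N + 1), r ^ l := by
        apply mul_le_mul_of_nonneg_left _ (by positivity)
        apply Finset.sum_le_sum_of_subset_of_nonneg
        · intro x hx
          obtain ⟨-, hx2⟩ := Finset.mem_Icc.mp hx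
          exact Finset.mem_range.mpr (Nat.lt_succ_of_le hx2)
        · intro i _ _; positivity
    _ ≤ 200 * M * dn * (1 / (1 - r)) := by
        apply mul_le_mul_of_nonneg_left _ (by positivity)
        rw [geom_sum_eq hr1.ne]
        rw [show (r ^ (N+1) - 1) / (r - 1) = (1 - r ^ (N+1)) / (1 - r) by
          rw [← neg_div_neg_eq]; ring_nf]
        gcongr
        · nlinarith [pow_nonneg hr0.le (N+1)]
    _ = (200 * M / (1 - r)) * dn := by ring

lemma main_ind (d θ : ℕ → ℝ) (hd0 : ∀ k, 0 < d k) (C₁ : ℝ) (hC₁ : 0 < C₁)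
    (hgroup : ∀ (n : ℕ) (G : Finset ℕ),
      (∀ k ∈ G, d k ≤ d n ∧ |θ k - θ n| ≤ d n) →
      ∑ k ∈ G, d k ≤ C₁ * d n) :
    ∀ F : Finset ℕ, ∑ k ∈ F, d k
      ≤ C₁ * (volume (⋃ k ∈ F, Set.Ioo (θ k - d k / 2) (θ k + d k / 2))).toReal := by
  set I : ℕ → Set ℝ := fun k => Set.Ioo (θ k - d k / 2) (θ k + d k / 2) with hI
  have hIvol : ∀ k, volume (I k) = ENNReal.ofReal (d k) := by
    intro k; rw [hI]; simp only [Real.volume_Ioo]; ring_nf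
  have hUfin : ∀ F : Finset ℕ, volume (⋃ k ∈ F, I k) ≠ ⊤ := by
    intro F
    refine ne_top_of_le_ne_top ?_ (measure_biUnion_finset_le F I)
    rw [← lt_top_iff_ne_top]
    apply ENNReal.sum_lt_top.mpr
    intro k _
    rw [hIvol k]
    exact ENNReal.ofReal_lt_top
  intro F
  induction F using Finset.strongInduction with
  | _ F ih =>
    rcases F.eq_empty_or_nonempty with rfl | hne
    · simp
    obtain ⟨n, hn, hmax⟩ := F.exists_max_image d hne
    set G := F.filter (fun k => |θ k - θ n| ≤ d n) with hG
    have hnG : n ∈ G := by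
      rw [hG, Finset.mem_filter]
      exact ⟨hn, by simp only [sub_self, abs_zero]; exact (hd0 n).le⟩
    set F' := F.filter (fun k => ¬ |θ k - θ n| ≤ d n) with hF'
    have hsplit : ∑ k ∈ G, d k + ∑ k ∈ F', d k = ∑ k ∈ F, d k :=
      Finset.sum_filter_add_sum_filter_not F _ d
    have hF'ss : F' ⊂ F := by
      rw [hF', Finset.filter_ssubset]
      exact ⟨n, hn, by simp only [not_not, sub_self, abs_zero]; exact (hd0 n).le⟩
    have hGsum : ∑ k ∈ G, d k ≤ C₁ * d n := by
      apply hgroup n G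
      intro k hk
      obtain ⟨hkF, hkθ⟩ := Finset.mem_filter.mp hk
      exact ⟨hmax k hkF, hkθ⟩
    have hF'sum := ih F' hF'ss
    have hdisj : Disjoint (I n) (⋃ k ∈ F', I k) := by
      rw [Set.disjoint_left]
      intro x hxn hxU
      simp only [Set.mem_iUnion] at hxU
      obtain ⟨k, hkF', hxk⟩ := hxU
      obtain ⟨hkF, hkθ⟩ := Finset.mem_filter.mp hkF'
      push_neg at hkθ
      have hkd : d k ≤ d n := hmax k hkF
      obtain ⟨a1, a2⟩ := hxn
      obtain ⟨b1, b2⟩ := hxk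
      have h1 : |x - θ n| < d n / 2 := by rw [abs_lt]; constructor <;> linarith
      have h2 : |x - θ k| < d n / 2 := by rw [abs_lt]; constructor <;> linarith
      have h3 : |θ k - θ n| ≤ |x - θ k| + |x - θ n| :=
        (abs_sub_le (θ k) x (θ n)).trans (by rw [abs_sub_comm (θ k) x])
      linarith
    have hmeas : ENNReal.ofReal (d n) + volume (⋃ k ∈ F', I k) ≤ volume (⋃ k ∈ F, I k) := by
      rw [← hIvol n,
        ← measure_union hdisj (Finset.measurableSet_biUnion F' (fun k _ => measurableSet_Ioo))]
      apply measure_mono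
      apply Set.union_subset
      · exact Set.subset_biUnion_of_mem hn
      · exact Set.biUnion_subset_biUnion_left (fun k hk => (Finset.mem_filter.mp hk).1)
    have hmeasR : d n + (volume (⋃ k ∈ F', I k)).toReal ≤ (volume (⋃ k ∈ F, I k)).toReal := by
      have h1 : (ENNReal.ofReal (d n) + volume (⋃ k ∈ F', I k)).toReal
          = d n + (volume (⋃ k ∈ F', I k)).toReal := by
        rw [ENNReal.toReal_add ENNReal.ofReal_ne_top (hUfin F'),
          ENNReal.toReal_ofReal (hd0 n).le]
      rw [← h1]
      exact (ENNReal.toReal_le_toReal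
        (ENNReal.add_ne_top.mpr ⟨ENNReal.ofReal_ne_top, hUfin F'⟩) (hUfin F)).mpr hmeas
    calc ∑ k ∈ F, d k = ∑ k ∈ G, d k + ∑ k ∈ F', d k := hsplit.symm
      _ ≤ C₁ * d n + C₁ * (volume (⋃ k ∈ F', I k)).toReal := add_le_add hGsum hF'sum
      _ = C₁ * (d n + (volume (⋃ k ∈ F', I k)).toReal) := by ring
      _ ≤ C₁ * (volume (⋃ k ∈ F, I k)).toReal := mul_le_mul_of_nonneg_left hmeasR hC₁.le


/-- A separated sequence satisfying condition (1.3) satisfies the Carleson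
condition: `Σ_{z_n ∈ Q} (1-|z_n|) ≤ C ℓ(Q)` for every Carleson square
`Q = {re^{iθ} : 0 < 1-r < ℓ, |θ - θ₀| < ℓ}`. -/
theorem counting_implies_carleson (z : ℕ → ℂ) (hz : ∀ n, z n ∈ unitDisc)
    (s : ℝ) (hs : 0 < s) (hsep : ∀ n m, n ≠ m → s ≤ hypDist (z n) (z m))
    (M α : ℝ) (hM : 0 < M) (hα : 0 < α) (hα1 : α < 1)
    (h13 : ∀ n : ℕ, ∀ l : ℕ, 1 ≤ l → ∀ F : Finset ℕ,
      (∀ j ∈ F, hypDist (z j) (z n) ≤ (l : ℝ)) →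
      (F.card : ℝ) ≤ M * (2:ℝ) ^ (α * (l : ℝ))) :
    ∃ C : ℝ, 0 < C ∧ ∀ θ₀ L : ℝ, 0 < L → ∀ F : Finset ℕ,
      (∀ n ∈ F, 1 - ‖z n‖ < L ∧ |Complex.arg (z n) - θ₀| < L) →
      ∑ n ∈ F, (1 - ‖z n‖) ≤ C * L := by
  have hz' : ∀ n, ‖z n‖ < 1 := by
    intro n
    have := hz n
    simpa [unitDisc, Metric.mem_ball, Complex.dist_eq] using this
  have hr1 : (2:ℝ) ^ (α - 1) < 1 :=
    Real.rpow_lt_one_of_one_lt_of_neg (by norm_num) (by linarith)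
  set C₁ : ℝ := 200 * M / (1 - (2:ℝ) ^ (α - 1)) with hC₁def
  have hC₁ : 0 < C₁ := div_pos (by linarith) (by linarith)
  refine ⟨3 * C₁, by linarith, ?_⟩
  intro θ₀ L hL F hF
  have hd0 : ∀ k, 0 < 1 - ‖z k‖ := fun k => by linarith [hz' k]
  have hgroup : ∀ (n : ℕ) (G : Finset ℕ),
      (∀ k ∈ G, (fun k => 1 - ‖z k‖) k ≤ (fun k => 1 - ‖z k‖) n ∧
        |(fun k => Complex.arg (z k)) k - (fun k => Complex.arg (z k)) n|
          ≤ (fun k => 1 - ‖z k‖) n) →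
      ∑ k ∈ G, (fun k => 1 - ‖z k‖) k
        ≤ C₁ * (fun k => 1 - ‖z k‖) n := by
    intro n G hG
    exact group_sum z hz' M α hM hα hα1 h13 n G hG
  have happ := main_ind (fun k => 1 - ‖z k‖) (fun k => Complex.arg (z k))
    hd0 C₁ hC₁ hgroup F
  have hsub : (⋃ k ∈ F, Set.Ioo (Complex.arg (z k) - (1 - ‖z k‖) / 2)
        (Complex.arg (z k) + (1 - ‖z k‖) / 2))
      ⊆ Set.Ioo (θ₀ - 3 / 2 * L) (θ₀ + 3 / 2 * L) := by
    refine Set.iUnion₂_subset fun k hk => ?_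
    obtain ⟨hk1, hk2⟩ := hF k hk
    obtain ⟨hk3, hk4⟩ := abs_lt.mp hk2
    exact Set.Ioo_subset_Ioo (by linarith [hd0 k]) (by linarith [hd0 k])
  have hvol : (volume (⋃ k ∈ F, Set.Ioo (Complex.arg (z k) - (1 - ‖z k‖) / 2)
      (Complex.arg (z k) + (1 - ‖z k‖) / 2))).toReal ≤ 3 * L := by
    have hm := measure_mono (μ := volume) hsub
    have h2 : (volume (Set.Ioo (θ₀ - 3 / 2 * L) (θ₀ + 3 / 2 * L))) = ENNReal.ofReal (3 * L) := by
      rw [Real.volume_Ioo]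
      congr 1
      ring
    rw [h2] at hm
    calc (volume _).toReal ≤ (ENNReal.ofReal (3 * L)).toReal :=
          ENNReal.toReal_mono ENNReal.ofReal_ne_top hm
      _ = 3 * L := ENNReal.toReal_ofReal (by linarith)
  calc ∑ n ∈ F, (1 - ‖z n‖)
      ≤ C₁ * (volume (⋃ k ∈ F, Set.Ioo (Complex.arg (z k) - (1 - ‖z k‖) / 2)
          (Complex.arg (z k) + (1 - ‖z k‖) / 2))).toReal := happ
    _ ≤ C₁ * (3 * L) := mul_le_mul_of_nonneg_left hvol hC₁.le
    _ = 3 * C₁ * L := by ring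
end

section
/- Let (z_k) be a separated sequence in the unit disc with separation constant s = inf_{k≠m} β(z_k,z_m) > 0, and suppose all z_k lie in a fixed Stolz angle Γ = {z ∈ D : |z − e^{iθ₀}| ≤ K(1−|z|)} for some K ≥ 1, θ₀ ∈ ℝ. Then there is a constant C = C(K, s) such that for every j ≥ 0 and every fixed point z_n, the number of points z_k ∈ Γ with |z_k| < |z_n| and j ≤ β(z_k,z_n) < j+1 is at most C. -/
lemma pseudoDist_nonneg (u v : ℂ) : 0 ≤ pseudoDist u v := by
  unfold pseudoDist; exact norm_nonneg _

lemma abs_floor_sub_lt {x y h : ℝ} (hh : 0 < h) (he : ⌊x/h⌋ = ⌊y/h⌋) :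
    |x - y| < h := by
  have h1 := Int.lt_floor_add_one (x/h)
  have h2 := Int.lt_floor_add_one (y/h)
  have h3 := Int.floor_le (x/h)
  have h4 := Int.floor_le (y/h)
  have hc : ((⌊x/h⌋ : ℤ) : ℝ) = ((⌊y/h⌋ : ℤ) : ℝ) := by exact_mod_cast he
  rw [abs_sub_lt_iff]
  constructor
  · have hx : (x - y)/h < 1 := by rw [sub_div]; linarith
    linarith [(div_lt_one hh).mp hx]
  · have hx : (y - x)/h < 1 := by rw [sub_div]; linarith
    linarith [(div_lt_one hh).mp hx]

lemma ratio_ge {r c : ℝ} (h0 : 0 ≤ r) (h1 : r < 1)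
    (hc : c ≤ Real.logb 2 ((1 + r) / (1 - r))) :
    (2:ℝ) ^ c * (1 - r) ≤ 1 + r := by
  have hx : (0:ℝ) < (1 + r)/(1 - r) := div_pos (by linarith) (by linarith)
  have h2 : (2:ℝ) ^ c ≤ (2:ℝ) ^ Real.logb 2 ((1+r)/(1-r)) :=
    Real.rpow_le_rpow_of_exponent_le one_le_two hc
  rw [Real.rpow_logb (by norm_num) (by norm_num) hx] at h2
  rw [← le_div_iff₀ (by linarith : (0:ℝ) < 1 - r)]
  exact h2

lemma ratio_lt {r c : ℝ} (h0 : 0 ≤ r) (h1 : r < 1)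
    (hc : Real.logb 2 ((1 + r) / (1 - r)) < c) :
    1 + r < (2:ℝ) ^ c * (1 - r) := by
  have hx : (0:ℝ) < (1 + r)/(1 - r) := div_pos (by linarith) (by linarith)
  have h2 : (1+r)/(1-r) < (2:ℝ)^c := by
    calc (1+r)/(1-r) = (2:ℝ) ^ Real.logb 2 ((1+r)/(1-r)) :=
          (Real.rpow_logb (by norm_num) (by norm_num) hx).symm
      _ < (2:ℝ)^c := Real.rpow_lt_rpow_of_exponent_lt one_lt_two hc
  rw [div_lt_iff₀ (by linarith : (0:ℝ) < 1 - r)] at h2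
  linarith

lemma disc_key (u v : ℂ) (hu : ‖u‖ < 1) (hv : ‖v‖ < 1) :
    pseudoDist u v < 1 ∧
    1 - ‖u‖ ≤ ‖1 - (starRingEnd ℂ) v * u‖ ∧
    (1 - pseudoDist u v ^ 2) * ‖1 - (starRingEnd ℂ) v * u‖ ^ 2
      = (1 - ‖u‖ ^ 2) * (1 - ‖v‖ ^ 2) ∧
    ‖u - v‖ = pseudoDist u v * ‖1 - (starRingEnd ℂ) v * u‖ := by
  have hu0 : 0 ≤ ‖u‖ := norm_nonneg u
  have hv0 : 0 ≤ ‖v‖ := norm_nonneg v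
  have hmul : ‖(starRingEnd ℂ) v * u‖ = ‖v‖ * ‖u‖ := by
    rw [norm_mul, Complex.norm_conj]
  have hA : 1 - ‖u‖ ≤ ‖1 - (starRingEnd ℂ) v * u‖ := by
    have h1 : ‖(1:ℂ)‖ - ‖(starRingEnd ℂ) v * u‖ ≤ ‖(1:ℂ) - (starRingEnd ℂ) v * u‖ :=
      norm_sub_norm_le _ _
    simp only [norm_one] at h1
    rw [hmul] at h1
    nlinarith
  have hApos : 0 < ‖1 - (starRingEnd ℂ) v * u‖ := lt_of_lt_of_le (by linarith) hA
  have hAne : ‖1 - (starRingEnd ℂ) v * u‖ ≠ 0 := ne_of_gt hApos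
  have hid : ‖1 - (starRingEnd ℂ) v * u‖ ^ 2 - ‖u - v‖ ^ 2
      = (1 - ‖u‖ ^ 2) * (1 - ‖v‖ ^ 2) := by
    rw [Complex.sq_norm, Complex.sq_norm, Complex.sq_norm, Complex.sq_norm]
    simp only [Complex.normSq_apply, Complex.sub_re, Complex.sub_im, Complex.mul_re,
      Complex.mul_im, Complex.one_re, Complex.one_im, Complex.conj_re, Complex.conj_im]
    ring
  have hrw : pseudoDist u v = ‖u - v‖ / ‖1 - (starRingEnd ℂ) v * u‖ := by
    unfold pseudoDist; rw [norm_div]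
  have hrhs : 0 < (1 - ‖u‖ ^ 2) * (1 - ‖v‖ ^ 2) :=
    mul_pos (by nlinarith) (by nlinarith)
  have hlt : ‖u - v‖ < ‖1 - (starRingEnd ℂ) v * u‖ := by
    nlinarith [norm_nonneg (u - v)]
  have hsq : pseudoDist u v ^ 2 * ‖1 - (starRingEnd ℂ) v * u‖ ^ 2
      = ‖u - v‖ ^ 2 := by
    rw [hrw, div_pow, div_mul_cancel₀ _ (pow_ne_zero 2 hAne)]
  refine ⟨by rw [hrw]; exact (div_lt_one hApos).mpr hlt, hA, ?_, ?_⟩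
  · linear_combination hid - hsq
  · rw [hrw, div_mul_cancel₀]
    exact hAne

lemma A_bound (K : ℝ) (u w ζ : ℂ) (hu1 : ‖u‖ < 1) (hw1 : ‖w‖ < 1)
    (hK : 0 ≤ K)
    (hKu : ‖u - ζ‖ ≤ K * (1 - ‖u‖))
    (hKw : ‖w - ζ‖ ≤ K * (1 - ‖w‖))
    (hab : ‖u‖ < ‖w‖) :
    ‖1 - (starRingEnd ℂ) w * u‖ ≤ 2*(1+K) * (1 - ‖u‖) := by
  have hu0 : 0 ≤ ‖u‖ := norm_nonneg u
  have hw0 : 0 ≤ ‖w‖ := norm_nonneg w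
  have e1 : (1:ℂ) - (starRingEnd ℂ) w * u
      = (1 - (starRingEnd ℂ) w * w) + (starRingEnd ℂ) w * (w - u) := by ring
  have e2 : ‖1 - (starRingEnd ℂ) w * w‖ = 1 - ‖w‖ ^ 2 := by
    have h3 : (starRingEnd ℂ) w * w = ((‖w‖ ^ 2 : ℝ) : ℂ) := by
      rw [mul_comm, Complex.mul_conj]
      norm_cast
      exact (Complex.sq_norm w).symm
    rw [h3, show (1:ℂ) - ((‖w‖ ^ 2 : ℝ):ℂ) = (((1 - ‖w‖ ^2 : ℝ)):ℂ) by
      push_cast; ring, Complex.norm_real, Real.norm_eq_abs, abs_of_nonneg (by nlinarith)]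
  have e3 : ‖w - u‖ ≤ ‖w - ζ‖ + ‖u - ζ‖ := by
    have h4 := norm_sub_le_norm_sub_add_norm_sub w ζ u
    have h5 : ‖ζ - u‖ = ‖u - ζ‖ := norm_sub_rev ζ u
    linarith
  calc ‖1 - (starRingEnd ℂ) w * u‖
      ≤ ‖1 - (starRingEnd ℂ) w * w‖
        + ‖(starRingEnd ℂ) w * (w - u)‖ := by
        rw [e1]; exact norm_add_le _ _
    _ = (1 - ‖w‖ ^ 2) + ‖w‖ * ‖w - u‖ := by
        rw [e2, norm_mul, Complex.norm_conj]
    _ ≤ 2*(1+K) * (1 - ‖u‖) := by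
        nlinarith [e3, hKu, hKw, sq_nonneg (1 - ‖w‖),
          mul_le_mul_of_nonneg_right hw1.le (norm_nonneg (w - u)),
          mul_le_mul_of_nonneg_left
            (show 1 - ‖w‖ ≤ 1 - ‖u‖ by linarith) hK]

set_option maxHeartbeats 1000000 in
lemma t_bounds {ρ A a b P K : ℝ}
    (hρ0 : 0 ≤ ρ) (hρ1 : ρ < 1) (ha0 : 0 ≤ a) (hb1 : b < 1)
    (hab : a < b) (hP : 0 < P) (hK : 1 ≤ K)
    (hAt : 1 - a ≤ A) (hAM : A ≤ 2*(1+K) * (1-a))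
    (hid : (1-ρ^2) * A^2 = (1-a^2)*(1-b^2))
    (h1 : P * (1-ρ) ≤ 1+ρ) (h2 : 1+ρ < 2*P*(1-ρ)) :
    (1-b)*P/(4*(2*(1+K))^2) ≤ 1 - a ∧ 1 - a ≤ 8*((1-b)*P) := by
  have ha1 : a < 1 := lt_trans hab hb1
  have ht : 0 < 1 - a := by linarith
  have hd : 0 < 1 - b := by linarith
  have hb0 : 0 < b := lt_of_le_of_lt ha0 hab
  have hA0 : 0 < A := lt_of_lt_of_le ht hAt
  have hM : (0:ℝ) < 2*(1+K) := by linarith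
  have hρsq : 0 ≤ 1 - ρ^2 := by nlinarith
  constructor
  · have v1 : (1-a)*(1-b) ≤ (1-ρ^2)*A^2 := by
      rw [hid]
      nlinarith [mul_nonneg (mul_nonneg hd.le ht.le) (show (0:ℝ) ≤ a + b + a*b by nlinarith)]
    have v2 : P*(1-ρ^2) ≤ 4 := by
      nlinarith [mul_le_mul_of_nonneg_right h1 (show (0:ℝ) ≤ 1+ρ by linarith)]
    have v3 : P*((1-a)*(1-b)) ≤ 4*((2*(1+K))^2*(1-a)^2) := by
      nlinarith [mul_le_mul_of_nonneg_left v1 hP.le,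
        mul_le_mul_of_nonneg_right v2 (sq_nonneg A),
        mul_self_le_mul_self hA0.le hAM]
    have v4 : (1-b)*P ≤ 4*(2*(1+K))^2*(1-a) := by nlinarith [v3, ht]
    rw [div_le_iff₀ (by positivity)]
    nlinarith [v4]
  · have c3 : (1-ρ^2)*(1-a)^2 ≤ 4*((1-a)*(1-b)) := by
      have e1 : (1-ρ^2)*((1-a)*(1-a)) ≤ (1-ρ^2)*(A*A) :=
        mul_le_mul_of_nonneg_left (mul_self_le_mul_self ht.le hAt) hρsq
      have e2 : (1-a^2)*(1-b^2) ≤ (2*(1-a))*(2*(1-b)) := by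
        nlinarith [sq_nonneg (1-a), sq_nonneg (1-b), mul_nonneg ht.le hd.le,
          mul_nonneg (mul_nonneg ht.le hd.le) (show (0:ℝ) ≤ a + b by linarith)]
      nlinarith [e1, e2, hid]
    have q1 : 1 ≤ 2*P*(1-ρ^2) := by
      nlinarith [mul_nonneg (mul_nonneg (show (0:ℝ) ≤ 2*P by linarith) hρ0)
        (show (0:ℝ) ≤ 1-ρ by linarith)]
    nlinarith [mul_le_mul_of_nonneg_left c3 (show (0:ℝ) ≤ 2*P by linarith),
      mul_le_mul_of_nonneg_left q1 (sq_nonneg (1-a)), ht]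

set_option maxHeartbeats 2000000 in
/-- For a separated sequence lying in a fixed Stolz angle
`Γ = {z ∈ D : |z - e^{iθ₀}| ≤ K(1-|z|)}`, the number of points `z_k` with
`|z_k| < |z_n|` and `j ≤ β(z_k,z_n) < j+1` is bounded by a constant
`C = C(K,s)` independent of `j` and `n`. -/
theorem stolz_angle_shell_count (z : ℕ → ℂ) (hz : ∀ k, z k ∈ unitDisc)
    (s : ℝ) (hs : 0 < s) (hsep : ∀ k m, k ≠ m → s ≤ hypDist (z k) (z m))
    (K θ₀ : ℝ) (hK : 1 ≤ K)
    (hstolz : ∀ k, ‖z k - Complex.exp ((θ₀ : ℂ) * Complex.I)‖ ≤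
      K * (1 - ‖z k‖)) :
    ∃ C : ℕ, ∀ j : ℕ, ∀ n : ℕ, ∀ F : Finset ℕ,
      (∀ k ∈ F, ‖z k‖ < ‖z n‖ ∧
        (j : ℝ) ≤ hypDist (z k) (z n) ∧ hypDist (z k) (z n) < (j : ℝ) + 1) →
      F.card ≤ C := by
  classical
  have h2s : (1:ℝ) < (2:ℝ) ^ s := by
    have := Real.rpow_lt_rpow_of_exponent_lt (x := (2:ℝ)) one_lt_two hs
    simpa using this
  set σ : ℝ := ((2:ℝ)^s - 1)/((2:ℝ)^s + 1) with hσdef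
  have hσpos : 0 < σ := div_pos (by linarith) (by linarith)
  set M : ℝ := 2*(1+K) with hMdef
  have hMpos : 0 < M := by rw [hMdef]; linarith
  set N : ℕ := ⌈128*K*M^2/σ⌉₊ + 2 with hNdef
  refine ⟨N*N, ?_⟩
  intro j n F hF
  set ζ : ℂ := Complex.exp ((θ₀:ℂ)*Complex.I) with hζdef
  have lt1 : ∀ k, ‖z k‖ < 1 := by
    intro k
    have := hz k
    simpa [unitDisc, Metric.mem_ball, Complex.dist_eq, sub_zero] using this
  have hd : 0 < 1 - ‖z n‖ := by linarith [lt1 n]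
  have hP : (0:ℝ) < (2:ℝ)^j := by positivity
  set L : ℝ := (1 - ‖z n‖) * (2:ℝ)^j with hLdef
  have hL : 0 < L := by rw [hLdef]; exact mul_pos hd hP
  -- per-point height estimates
  have key : ∀ k ∈ F, L/(4*M^2) ≤ 1 - ‖z k‖
      ∧ 1 - ‖z k‖ ≤ 8*L := by
    intro k hk
    obtain ⟨hab, hj1, hj2⟩ := hF k hk
    unfold hypDist at hj1 hj2
    obtain ⟨hρ1, hAt, hid, -⟩ := disc_key (z k) (z n) (lt1 k) (lt1 n)
    have hρ0 : 0 ≤ pseudoDist (z k) (z n) := pseudoDist_nonneg _ _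
    have h1 : (2:ℝ)^j * (1 - pseudoDist (z k) (z n)) ≤ 1 + pseudoDist (z k) (z n) := by
      have := ratio_ge hρ0 hρ1 hj1
      rwa [Real.rpow_natCast] at this
    have h2 : 1 + pseudoDist (z k) (z n) < 2*(2:ℝ)^j * (1 - pseudoDist (z k) (z n)) := by
      have := ratio_lt hρ0 hρ1 hj2
      rw [show ((j:ℝ)+1) = ((j+1:ℕ):ℝ) by push_cast; ring, Real.rpow_natCast,
        pow_succ] at this
      nlinarith [this]
    have hAM := A_bound K (z k) (z n) ζ (lt1 k) (lt1 n) (by linarith)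
      (hstolz k) (hstolz n) hab
    have hb := t_bounds hρ0 hρ1 (norm_nonneg _) (lt1 n) hab hP hK hAt hAM hid h1 h2
    constructor
    · rw [hLdef, hMdef]; exact hb.1
    · rw [hLdef]; exact hb.2
  -- pairwise Euclidean separation
  set δ : ℝ := σ * (L/(4*M^2)) with hδdef
  have hMsq : (0:ℝ) < 4*M^2 := by nlinarith [hMpos]
  have hδpos : 0 < δ := by rw [hδdef]; exact mul_pos hσpos (div_pos hL hMsq)
  have sep : ∀ k ∈ F, ∀ m ∈ F, k ≠ m → δ ≤ ‖z k - z m‖ := by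
    intro k hk m hm hkm
    obtain ⟨hρ1, hAt, -, habs⟩ := disc_key (z k) (z m) (lt1 k) (lt1 m)
    have hρ0 : 0 ≤ pseudoDist (z k) (z m) := pseudoDist_nonneg _ _
    have hh := hsep k m hkm
    unfold hypDist at hh
    have hσρ : σ ≤ pseudoDist (z k) (z m) := by
      have h := ratio_ge hρ0 hρ1 hh
      rw [hσdef, div_le_iff₀ (by linarith : (0:ℝ) < (2:ℝ)^s + 1)]
      nlinarith [h]
    have hAk : L/(4*M^2) ≤ ‖1 - (starRingEnd ℂ) (z m) * (z k)‖ :=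
      le_trans (key k hk).1 hAt
    rw [habs, hδdef]
    exact mul_le_mul hσρ hAk (le_of_lt (div_pos hL hMsq)) hρ0
  -- grid pigeonhole
  set q : ℝ := δ/2 with hqdef
  have hq : 0 < q := by rw [hqdef]; linarith
  set f : ℕ → ℤ × ℤ := fun k => (⌊(z k).re / q⌋, ⌊(z k).im / q⌋) with hfdef
  have hinj : Set.InjOn f F := by
    intro k hk m hm hfeq
    by_contra hkm
    have hsep' := sep k hk m hm hkm
    have hfeq' : ⌊(z k).re/q⌋ = ⌊(z m).re/q⌋ ∧ ⌊(z k).im/q⌋ = ⌊(z m).im/q⌋ := by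
      simpa [hfdef, Prod.ext_iff] using hfeq
    have h1 := abs_floor_sub_lt hq hfeq'.1
    have h2 := abs_floor_sub_lt hq hfeq'.2
    have h1' := abs_lt.mp h1
    have h2' := abs_lt.mp h2
    have hsq : ‖z k - z m‖^2
        = ((z k).re - (z m).re)^2 + ((z k).im - (z m).im)^2 := by
      rw [Complex.sq_norm, Complex.normSq_apply, Complex.sub_re, Complex.sub_im]
      ring
    have hq2 : q^2 = δ^2/4 := by rw [hqdef]; ring
    nlinarith [h1'.1, h1'.2, h2'.1, h2'.2, hsq, hq2, hsep', hδpos,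
      mul_self_le_mul_self hδpos.le hsep', pow_pos hδpos 2]
  set R : ℝ := 8*K*L with hRdef
  have hK0 : (0:ℝ) < K := by linarith
  have hmem : ∀ k ∈ F, |(z k).re - ζ.re| ≤ R ∧ |(z k).im - ζ.im| ≤ R := by
    intro k hk
    have ht8 := (key k hk).2
    have hstk := hstolz k
    have hzζ : ‖z k - ζ‖ ≤ R := by
      rw [hRdef]
      calc ‖z k - ζ‖ ≤ K * (1 - ‖z k‖) := hstk
        _ ≤ K * (8*L) := by nlinarith [ht8]
        _ = 8*K*L := by ring
    constructor
    · have hre := Complex.abs_re_le_norm (z k - ζ)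
      rw [Complex.sub_re] at hre
      linarith
    · have him := Complex.abs_im_le_norm (z k - ζ)
      rw [Complex.sub_im] at him
      linarith
  have hsub : F.image f ⊆
      (Finset.Icc ⌊(ζ.re - R)/q⌋ ⌊(ζ.re + R)/q⌋) ×ˢ
      (Finset.Icc ⌊(ζ.im - R)/q⌋ ⌊(ζ.im + R)/q⌋) := by
    intro p hp
    rcases Finset.mem_image.mp hp with ⟨k, hk, rfl⟩
    obtain ⟨hre, him⟩ := hmem k hk
    have hre' := abs_le.mp hre
    have him' := abs_le.mp him
    simp only [hfdef, Finset.mem_product, Finset.mem_Icc]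
    refine ⟨⟨Int.floor_mono ?_, Int.floor_mono ?_⟩, Int.floor_mono ?_, Int.floor_mono ?_⟩ <;>
      · apply (div_le_div_iff_of_pos_right hq).mpr; linarith
  have hRq : 2*R/q = 128*K*M^2/σ := by
    rw [hRdef, hqdef, hδdef]
    field_simp
    ring
  have hcount : ∀ lo hi : ℝ, hi - lo ≤ 2*R → (Finset.Icc ⌊lo/q⌋ ⌊hi/q⌋).card ≤ N := by
    intro lo hi hlh
    rw [Int.card_Icc]
    rw [Int.toNat_le]
    have e1 : ((⌊hi/q⌋:ℤ):ℝ) ≤ hi/q := Int.floor_le _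
    have e2 : lo/q - 1 < ((⌊lo/q⌋:ℤ):ℝ) := Int.sub_one_lt_floor _
    have e3 : hi/q - lo/q ≤ 128*K*M^2/σ := by
      rw [← hRq, ← sub_div]
      exact (div_le_div_iff_of_pos_right hq).mpr hlh
    have e7 := Nat.le_ceil (128*K*M^2/σ)
    have e6 : ((⌊hi/q⌋ + 1 - ⌊lo/q⌋ : ℤ) : ℝ) ≤ (N:ℝ) := by
      rw [hNdef]
      push_cast
      linarith
    exact_mod_cast e6
  calc F.card = (F.image f).card := (Finset.card_image_of_injOn hinj).symm
    _ ≤ ((Finset.Icc ⌊(ζ.re - R)/q⌋ ⌊(ζ.re + R)/q⌋) ×ˢ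
        (Finset.Icc ⌊(ζ.im - R)/q⌋ ⌊(ζ.im + R)/q⌋)).card := Finset.card_le_card hsub
    _ = (Finset.Icc ⌊(ζ.re - R)/q⌋ ⌊(ζ.re + R)/q⌋).card *
        (Finset.Icc ⌊(ζ.im - R)/q⌋ ⌊(ζ.im + R)/q⌋).card := Finset.card_product _ _
    _ ≤ N * N := Nat.mul_le_mul (hcount _ _ (by linarith)) (hcount _ _ (by linarith))
end

section
/- Let (z_n) be a separated sequence in the unit disc satisfying condition (1.3) for some M > 0 and 0 < α < 1, and suppose (z_n) is an interpolating sequence for the bounded analytic functions H^∞ (in the Carleson sense). Then (z_n) is an interpolating sequence for the zero-free bounded analytic functions: there exist ε > 0 and C > 0 such that for every sequence of nonzero complex values (w_n) with sup|w_n| < C and |log(log(C/|w_n|)) − log(log(C/|w_m|))| ≤ ε β(z_n,z_m) for all n,m, there exists a zero-free f ∈ H^∞(D) with f(z_n) = w_n for all n. (This uses, as a hypothesis, that separated sequences with (1.3) are interpolating for h⁺.) -/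
/-!
Put `C = 1` and `t_n = log (1/|w_n|) > 0`. The hypothesis on `w` is exactly the `h⁺` condition
for `t` (up to the factor `log 2` between `log` and `log₂`), so `t_n = Re F(z_n)` for a
holomorphic `F` with positive real part. Then `e^{-F}` has the right modulus at each `z_n`, and
the unimodular phase corrections `q_n = w_n e^{F(z_n)}` are fixed by `e^{i g}`, where `g ∈ H^∞`
interpolates the bounded real numbers `arg q_n`. The function `f = e^{i g - F}` is zero-free and
`|f| ≤ e^{sup |g|}`.
-/

open Complex

theorem Real.abs_logb_sub_logb_le {b x y ε d : ℝ} (hb : 1 < b)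
    (h : |Real.log x - Real.log y| ≤ ε * Real.log b * d) :
    |Real.logb b x - Real.logb b y| ≤ ε * d := by
  have hlogb : 0 < Real.log b := Real.log_pos hb
  rw [Real.logb, Real.logb, div_sub_div_same, abs_div, abs_of_pos hlogb, div_le_iff₀ hlogb]
  linarith

namespace Complex

theorem exp_arg_mul_I_of_norm_eq_one {q : ℂ} (hq : ‖q‖ = 1) : exp (arg q * I) = q := by
  simpa [hq] using norm_mul_exp_arg_mul_I q

theorem norm_mul_exp_eq_one {w F : ℂ} (hw : w ≠ 0) (hF : F.re = Real.log (1 / ‖w‖)) :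
    ‖w * exp F‖ = 1 := by
  have hw' : 0 < ‖w‖ := norm_pos_iff.mpr hw
  rw [norm_mul, norm_exp, hF, Real.exp_log (one_div_pos.mpr hw'), mul_one_div_cancel hw'.ne']

theorem norm_exp_I_mul_sub_le {a b : ℂ} {B : ℝ} (ha : ‖a‖ ≤ B) (hb : 0 < b.re) :
    ‖exp (I * a - b)‖ ≤ Real.exp B := by
  rw [norm_exp, Real.exp_le_exp, sub_re, I_mul_re]
  linarith [neg_le_abs a.im, abs_im_le_norm a]

end Complex

theorem zero_free_interpolation_general (z : ℕ → ℂ) (hz : ∀ n, z n ∈ unitDisc)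
    (hHinf : ∀ w : ℕ → ℂ, (∃ B : ℝ, ∀ n, ‖w n‖ ≤ B) →
      ∃ f : ℂ → ℂ, DifferentiableOn ℂ f unitDisc ∧
        (∃ B : ℝ, ∀ ζ ∈ unitDisc, ‖f ζ‖ ≤ B) ∧ ∀ n, f (z n) = w n)
    (hplus : ∃ ε : ℝ, 0 < ε ∧ ∀ t : ℕ → ℝ, (∀ n, 0 < t n) →
      (∀ n m, |Real.logb 2 (t n) - Real.logb 2 (t m)| ≤ ε * hypDist (z n) (z m)) →
      ∃ u : ℂ → ℝ, HarmonicOnDisc u ∧ (∀ ζ ∈ unitDisc, 0 < u ζ) ∧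
        ∀ n, u (z n) = t n) :
    ∃ ε C : ℝ, 0 < ε ∧ 0 < C ∧ ∀ w : ℕ → ℂ, (∀ n, w n ≠ 0) →
      (∀ n, ‖w n‖ < C) →
      (∀ n m, |Real.log (Real.log (C / ‖w n‖)) -
          Real.log (Real.log (C / ‖w m‖))| ≤ ε * hypDist (z n) (z m)) →
      ∃ f : ℂ → ℂ, DifferentiableOn ℂ f unitDisc ∧
        (∃ B : ℝ, ∀ ζ ∈ unitDisc, ‖f ζ‖ ≤ B) ∧
        (∀ ζ ∈ unitDisc, f ζ ≠ 0) ∧ ∀ n, f (z n) = w n := by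
  obtain ⟨ε, hε, hplus⟩ := hplus
  refine ⟨ε * Real.log 2, 1, by positivity, one_pos, fun w hw0 hw1 hlip => ?_⟩
  have ht : ∀ n, 0 < Real.log (1 / ‖w n‖) := fun n =>
    Real.log_pos ((one_lt_div (norm_pos_iff.mpr (hw0 n))).mpr (hw1 n))
  obtain ⟨u, ⟨F, hF, hFre⟩, hupos, huz⟩ :=
    hplus _ ht fun n m => Real.abs_logb_sub_logb_le one_lt_two (hlip n m)
  have hphase : ∀ n, ‖w n * exp (F (z n))‖ = 1 := fun n =>
    norm_mul_exp_eq_one (hw0 n) ((hFre _ (hz n)).symm.trans (huz n))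
  obtain ⟨g, hg, ⟨B, hB⟩, hgz⟩ :=
    hHinf (fun n => (arg (w n * exp (F (z n))) : ℂ)) ⟨Real.pi, fun n => by
      simpa only [norm_real, Real.norm_eq_abs] using abs_arg_le_pi _⟩
  refine ⟨fun ζ => exp (I * g ζ - F ζ), ((hg.const_mul I).sub hF).cexp, ⟨Real.exp B, ?_⟩,
    fun _ _ => exp_ne_zero _, fun n => ?_⟩
  · intro ζ hζ
    exact norm_exp_I_mul_sub_le (hB ζ hζ) ((hFre ζ hζ).symm ▸ hupos ζ hζ)
  · dsimp only
    rw [exp_sub, hgz n, mul_comm I, exp_arg_mul_I_of_norm_eq_one (hphase n),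
      mul_div_cancel_right₀ _ (exp_ne_zero _)]

/-- A separated sequence satisfying condition (1.3) which is interpolating for
`H^∞` (and, by the main theorem of the paper, assumed interpolating for `h⁺`)
is interpolating for the zero-free bounded analytic functions: there are
`ε, C > 0` such that any nonvanishing targets `w_n` with `sup |w_n| < C` and
`|log log(C/|w_n|) - log log(C/|w_m|)| ≤ ε β(z_n,z_m)` are interpolated by a
zero-free bounded analytic function on the disc. -/
theorem zero_free_interpolation (z : ℕ → ℂ) (hz : ∀ n, z n ∈ unitDisc)
    (s : ℝ) (hs : 0 < s) (hsep : ∀ n m, n ≠ m → s ≤ hypDist (z n) (z m))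
    (M α : ℝ) (hM : 0 < M) (hα : 0 < α) (hα1 : α < 1)
    (h13 : ∀ n : ℕ, ∀ l : ℕ, 1 ≤ l → ∀ F : Finset ℕ,
      (∀ j ∈ F, hypDist (z j) (z n) ≤ (l : ℝ)) →
      (F.card : ℝ) ≤ M * (2:ℝ) ^ (α * (l : ℝ)))
    (hHinf : ∀ w : ℕ → ℂ, (∃ B : ℝ, ∀ n, ‖w n‖ ≤ B) →
      ∃ f : ℂ → ℂ, DifferentiableOn ℂ f unitDisc ∧
        (∃ B : ℝ, ∀ ζ ∈ unitDisc, ‖f ζ‖ ≤ B) ∧ ∀ n, f (z n) = w n)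
    (hplus : ∃ ε : ℝ, 0 < ε ∧ ∀ t : ℕ → ℝ, (∀ n, 0 < t n) →
      (∀ n m, |Real.logb 2 (t n) - Real.logb 2 (t m)| ≤ ε * hypDist (z n) (z m)) →
      ∃ u : ℂ → ℝ, HarmonicOnDisc u ∧ (∀ ζ ∈ unitDisc, 0 < u ζ) ∧
        ∀ n, u (z n) = t n) :
    ∃ ε C : ℝ, 0 < ε ∧ 0 < C ∧ ∀ w : ℕ → ℂ, (∀ n, w n ≠ 0) →
      (∀ n, ‖w n‖ < C) →
      (∀ n m, |Real.log (Real.log (C / ‖w n‖)) -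
          Real.log (Real.log (C / ‖w m‖))| ≤ ε * hypDist (z n) (z m)) →
      ∃ f : ℂ → ℂ, DifferentiableOn ℂ f unitDisc ∧
        (∃ B : ℝ, ∀ ζ ∈ unitDisc, ‖f ζ‖ ≤ B) ∧
        (∀ ζ ∈ unitDisc, f ζ ≠ 0) ∧ ∀ n, f (z n) = w n :=
  zero_free_interpolation_general z hz hHinf hplus
end
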